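/- Let B ∈ GL(d,ℚ). Then the subgroup N = ⟨T_k, M_l, τ : k ∈ B^{-tr}ℤ^d ∩ ℤ^d, l ∈ Bℤ^d, τ ∈ [G,G]⟩ is an abelian normal subgroup of the time-frequency group G = ⟨T_k, M_l : k ∈ ℤ^d, l ∈ Bℤ^d⟩. Concretely, for s ∈ ℤ^d one has T_s (T_k M_l τ) T_s^{-1} = e^{-2πi⟨l,s⟩} τ T_k M_l ∈ N, and for s ∈ Bℤ^d one has M_s (T_k M_l τ) M_s^{-1} = τ T_k M_l ∈ N. -/

import Mathlib

noncomputable section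

open Complex Matrix

/-- The real dot product on `Fin d → ℝ`. -/
def dotR {d : ℕ} (a b : Fin d → ℝ) : ℝ := ∑ i, a i * b i

/-- `e2pi t = exp (2 π i t)`. -/
def e2pi (t : ℝ) : ℂ := Complex.exp (2 * Real.pi * Complex.I * t)

lemma e2pi_add (s t : ℝ) : e2pi (s + t) = e2pi s * e2pi t := by
  rw [e2pi, e2pi, e2pi, ← Complex.exp_add]
  congr 1
  push_cast
  ring

lemma e2pi_zero : e2pi 0 = 1 := by simp [e2pi]

lemma e2pi_neg_mul (t : ℝ) : e2pi (-t) * e2pi t = 1 := by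
  rw [← e2pi_add, neg_add_cancel, e2pi_zero]

/-- Translation operator `T_k f (x) = f (x - k)`, as a bijection of functions. -/
def Tr {d : ℕ} (k : Fin d → ℝ) : Equiv.Perm ((Fin d → ℝ) → ℂ) where
  toFun f := fun x => f (x - k)
  invFun f := fun x => f (x + k)
  left_inv f := by funext x; simp
  right_inv f := by funext x; simp

/-- Modulation operator `M_l f (x) = e^{2πi⟨l,x⟩} f (x)`. -/
def Mo {d : ℕ} (l : Fin d → ℝ) : Equiv.Perm ((Fin d → ℝ) → ℂ) where
  toFun f := fun x => e2pi (dotR l x) * f x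
  invFun f := fun x => e2pi (-(dotR l x)) * f x
  left_inv f := by
    funext x; dsimp; rw [← mul_assoc, e2pi_neg_mul, one_mul]
  right_inv f := by
    funext x; dsimp
    rw [← mul_assoc, mul_comm (e2pi (dotR l x)), e2pi_neg_mul, one_mul]

/-- Scalar operator: multiplication by the unimodular constant `e^{2πiθ}`. -/
def Sc {d : ℕ} (θ : ℝ) : Equiv.Perm ((Fin d → ℝ) → ℂ) where
  toFun f := fun x => e2pi θ * f x
  invFun f := fun x => e2pi (-θ) * f x
  left_inv f := by
    funext x; dsimp; rw [← mul_assoc, e2pi_neg_mul, one_mul]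
  right_inv f := by
    funext x; dsimp
    rw [← mul_assoc, mul_comm (e2pi θ), e2pi_neg_mul, one_mul]

/-- The time–frequency group `G = ⟨T_k, M_l : k ∈ ℤ^d, l ∈ Bℤ^d⟩`. -/
def TFGroup {d : ℕ} (B : Matrix (Fin d) (Fin d) ℝ) :
    Subgroup (Equiv.Perm ((Fin d → ℝ) → ℂ)) :=
  Subgroup.closure
    ({g | ∃ k : Fin d → ℤ, g = Tr (fun i => (k i : ℝ))} ∪
     {g | ∃ z : Fin d → ℤ, g = Mo (B.mulVec (fun i => (z i : ℝ)))})


/-- The subgroup `N = ⟨T_k, M_l, τ : k ∈ B^{-tr}ℤ^d ∩ ℤ^d, l ∈ Bℤ^d, τ ∈ [G,G]⟩`. -/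
def Nsub {d : ℕ} (B : Matrix (Fin d) (Fin d) ℝ) : Subgroup (Equiv.Perm ((Fin d → ℝ) → ℂ)) :=
  Subgroup.closure
    ({g | ∃ k : Fin d → ℤ, (∃ z : Fin d → ℤ,
        (fun i => (k i : ℝ)) = (B⁻¹)ᵀ.mulVec (fun i => (z i : ℝ))) ∧
        g = Tr (fun i => (k i : ℝ))} ∪
     {g | ∃ w : Fin d → ℤ, g = Mo (B.mulVec (fun i => (w i : ℝ)))} ∪
     {g | g ∈ ⁅TFGroup B, TFGroup B⁆})

/-!
Every element of `G` is a time–frequency shift `e^{2πiθ} T_a M_l` with `a ∈ ℤ^d`, `l ∈ Bℤ^d`,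
and such shifts multiply according to `M_l T_b = e^{2πi⟨l,b⟩} T_b M_l`. Hence commutators are
scalars, and two shifts commute once the pairings `⟨l,b⟩` and `⟨m,a⟩` are integers. In `N` the
translation parts lie in `B^{-tr}ℤ^d`, the dual lattice of `Bℤ^d`, so `N` is abelian; it is normal
because `g n g⁻¹ = ⁅g, n⁆ n` with `⁅g, n⁆ ∈ [G,G] ⊆ N`.
-/

open scoped commutatorElement

variable {d : ℕ}

lemma e2pi_intCast (n : ℤ) : e2pi n = 1 := by
  simpa [e2pi, mul_comm] using Complex.exp_int_mul_two_pi_mul_I n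

lemma dotR_add_left (a b x : Fin d → ℝ) : dotR (a + b) x = dotR a x + dotR b x := by
  simp [dotR, add_mul, Finset.sum_add_distrib]

lemma dotR_add_right (l a b : Fin d → ℝ) : dotR l (a + b) = dotR l a + dotR l b := by
  simp [dotR, mul_add, Finset.sum_add_distrib]

lemma dotR_neg_left (l a : Fin d → ℝ) : dotR (-l) a = -dotR l a := by
  simp [dotR]

lemma dotR_neg_right (l a : Fin d → ℝ) : dotR l (-a) = -dotR l a := by
  simp [dotR]

lemma dotR_sub_right (l a b : Fin d → ℝ) : dotR l (a - b) = dotR l a - dotR l b := by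
  simp [dotR, mul_sub, Finset.sum_sub_distrib]

lemma dotR_zero_left (a : Fin d → ℝ) : dotR 0 a = 0 := by simp [dotR]

lemma dotR_zero_right (a : Fin d → ℝ) : dotR a 0 = 0 := by simp [dotR]

lemma dotR_mulVec_inv_transpose_mulVec {M : Matrix (Fin d) (Fin d) ℝ} (hM : IsUnit M.det)
    (w z : Fin d → ℝ) : dotR (M *ᵥ w) ((M⁻¹)ᵀ *ᵥ z) = dotR w z := by
  change (M *ᵥ w) ⬝ᵥ ((M⁻¹)ᵀ *ᵥ z) = w ⬝ᵥ z
  rw [dotProduct_mulVec, vecMul_transpose, mulVec_mulVec, nonsing_inv_mul M hM, one_mulVec]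

lemma Sc_zero : Sc (d := d) 0 = 1 := by
  ext f x
  simp [Sc, e2pi_zero]

lemma Sc_intCast (n : ℤ) : Sc (d := d) n = 1 := by
  ext f x
  simp [Sc, e2pi_intCast]

def tfShift (θ : ℝ) (a l : Fin d → ℝ) : Equiv.Perm ((Fin d → ℝ) → ℂ) := Sc θ * Tr a * Mo l

lemma Sc_eq_tfShift (θ : ℝ) : Sc θ = tfShift θ (0 : Fin d → ℝ) 0 := by
  ext f x
  simp [tfShift, Sc, Tr, Mo, dotR_zero_left, e2pi_zero]

lemma Tr_eq_tfShift (a : Fin d → ℝ) : Tr a = tfShift 0 a 0 := by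
  ext f x
  simp [tfShift, Sc, Tr, Mo, dotR_zero_left, e2pi_zero]

lemma Mo_eq_tfShift (l : Fin d → ℝ) : Mo l = tfShift 0 0 l := by
  ext f x
  simp [tfShift, Sc, Tr, Mo, e2pi_zero]

lemma tfShift_zero : tfShift (0 : ℝ) (0 : Fin d → ℝ) 0 = 1 := by
  rw [← Sc_eq_tfShift, Sc_zero]

lemma tfShift_mul_tfShift (s t : ℝ) (a l b m : Fin d → ℝ) :
    tfShift s a l * tfShift t b m = tfShift (s + t + dotR l b) (a + b) (l + m) := by
  ext f x
  simp only [tfShift, Sc, Mo, Tr, Equiv.Perm.mul_apply, Equiv.coe_fn_mk]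
  simp only [← mul_assoc, ← e2pi_add, sub_sub, dotR_add_left, dotR_add_right, dotR_sub_right]
  congr 2
  ring

lemma tfShift_inv (s : ℝ) (a l : Fin d → ℝ) :
    (tfShift s a l)⁻¹ = tfShift (dotR l a - s) (-a) (-l) := by
  refine inv_eq_of_mul_eq_one_right ?_
  rw [tfShift_mul_tfShift, dotR_neg_right, add_neg_cancel, add_neg_cancel, ← tfShift_zero]
  congr 1
  ring

lemma commutatorElement_tfShift (s t : ℝ) (a l b m : Fin d → ℝ) :
    ⁅tfShift s a l, tfShift t b m⁆ = Sc (dotR l b - dotR m a) := by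
  rw [commutatorElement_def, tfShift_inv, tfShift_inv, Sc_eq_tfShift]
  simp only [tfShift_mul_tfShift, dotR_add_left, dotR_neg_left, dotR_neg_right]
  congr 1 <;> ring

def intLattice (d : ℕ) : AddSubgroup (Fin d → ℝ) :=
  ((Int.castAddHom ℝ).compLeft (Fin d)).range

lemma intCast_mem_intLattice (k : Fin d → ℤ) : (fun i => (k i : ℝ)) ∈ intLattice d :=
  ⟨k, rfl⟩

def matLattice (M : Matrix (Fin d) (Fin d) ℝ) : AddSubgroup (Fin d → ℝ) :=
  (intLattice d).map M.mulVecLin.toAddMonoidHom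

lemma mulVec_intCast_mem_matLattice (M : Matrix (Fin d) (Fin d) ℝ) (k : Fin d → ℤ) :
    M *ᵥ (fun i => (k i : ℝ)) ∈ matLattice M :=
  ⟨_, intCast_mem_intLattice k, rfl⟩

def tfShiftGroup (A L : AddSubgroup (Fin d → ℝ)) : Subgroup (Equiv.Perm ((Fin d → ℝ) → ℂ)) where
  carrier := {g | ∃ θ, ∃ a ∈ A, ∃ l ∈ L, g = tfShift θ a l}
  one_mem' := ⟨0, 0, zero_mem A, 0, zero_mem L, tfShift_zero.symm⟩
  mul_mem' := by
    rintro _ _ ⟨s, a, ha, l, hl, rfl⟩ ⟨t, b, hb, m, hm, rfl⟩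
    exact ⟨_, _, add_mem ha hb, _, add_mem hl hm, tfShift_mul_tfShift s t a l b m⟩
  inv_mem' := by
    rintro _ ⟨s, a, ha, l, hl, rfl⟩
    exact ⟨_, _, neg_mem ha, _, neg_mem hl, tfShift_inv s a l⟩

lemma tfShift_mem_tfShiftGroup {A L : AddSubgroup (Fin d → ℝ)} (θ : ℝ) {a l : Fin d → ℝ}
    (ha : a ∈ A) (hl : l ∈ L) : tfShift θ a l ∈ tfShiftGroup A L :=
  ⟨θ, a, ha, l, hl, rfl⟩

lemma tfShiftGroup_mono {A A' L L' : AddSubgroup (Fin d → ℝ)} (hA : A ≤ A') (hL : L ≤ L') :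
    tfShiftGroup A L ≤ tfShiftGroup A' L' := by
  rintro _ ⟨θ, a, ha, l, hl, rfl⟩
  exact tfShift_mem_tfShiftGroup θ (hA ha) (hL hl)

lemma commutator_tfShiftGroup_le (A L : AddSubgroup (Fin d → ℝ)) :
    ⁅tfShiftGroup A L, tfShiftGroup A L⁆ ≤ tfShiftGroup ⊥ ⊥ := by
  rw [Subgroup.commutator_le]
  rintro _ ⟨s, a, -, l, -, rfl⟩ _ ⟨t, b, -, m, -, rfl⟩
  rw [commutatorElement_tfShift, Sc_eq_tfShift]
  exact tfShift_mem_tfShiftGroup _ (zero_mem _) (zero_mem _)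

lemma tfShiftGroup_commute {A L : AddSubgroup (Fin d → ℝ)}
    (hAL : ∀ a ∈ A, ∀ l ∈ L, ∃ n : ℤ, dotR l a = n) {g h : Equiv.Perm ((Fin d → ℝ) → ℂ)}
    (hg : g ∈ tfShiftGroup A L) (hh : h ∈ tfShiftGroup A L) : Commute g h := by
  obtain ⟨s, a, ha, l, hl, rfl⟩ := hg
  obtain ⟨t, b, hb, m, hm, rfl⟩ := hh
  obtain ⟨n, hn⟩ := hAL b hb l hl
  obtain ⟨n', hn'⟩ := hAL a ha m hm
  rw [← commutatorElement_eq_one_iff_commute, commutatorElement_tfShift, hn, hn', ← Int.cast_sub,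
    Sc_intCast]

lemma TFGroup_le_tfShiftGroup (M : Matrix (Fin d) (Fin d) ℝ) :
    TFGroup M ≤ tfShiftGroup (intLattice d) (matLattice M) := by
  rw [TFGroup, Subgroup.closure_le]
  rintro _ (⟨k, rfl⟩ | ⟨w, rfl⟩)
  · rw [Tr_eq_tfShift]
    exact tfShift_mem_tfShiftGroup 0 (intCast_mem_intLattice k) (zero_mem _)
  · rw [Mo_eq_tfShift]
    exact tfShift_mem_tfShiftGroup 0 (zero_mem _) (mulVec_intCast_mem_matLattice M w)

lemma Nsub_le_tfShiftGroup (M : Matrix (Fin d) (Fin d) ℝ) :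
    Nsub M ≤ tfShiftGroup (matLattice (M⁻¹)ᵀ) (matLattice M) := by
  rw [Nsub, Subgroup.closure_le]
  rintro _ ((⟨k, ⟨z, hz⟩, rfl⟩ | ⟨w, rfl⟩) | hτ)
  · rw [Tr_eq_tfShift]
    exact tfShift_mem_tfShiftGroup 0 (hz ▸ mulVec_intCast_mem_matLattice _ z) (zero_mem _)
  · rw [Mo_eq_tfShift]
    exact tfShift_mem_tfShiftGroup 0 (zero_mem _) (mulVec_intCast_mem_matLattice M w)
  · have hG := Subgroup.commutator_mono (TFGroup_le_tfShiftGroup M) (TFGroup_le_tfShiftGroup M)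
    exact tfShiftGroup_mono bot_le bot_le (commutator_tfShiftGroup_le _ _ (hG hτ))

lemma exists_int_dotR_eq_of_mem_matLattice {M : Matrix (Fin d) (Fin d) ℝ} (hM : IsUnit M.det)
    {a l : Fin d → ℝ} (ha : a ∈ matLattice (M⁻¹)ᵀ) (hl : l ∈ matLattice M) :
    ∃ n : ℤ, dotR l a = n := by
  obtain ⟨_, ⟨z, rfl⟩, rfl⟩ := ha
  obtain ⟨_, ⟨w, rfl⟩, rfl⟩ := hl
  refine ⟨∑ i, w i * z i, ?_⟩
  change dotR (M *ᵥ _) ((M⁻¹)ᵀ *ᵥ _) = _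
  rw [dotR_mulVec_inv_transpose_mulVec hM]
  simp [dotR]

lemma Nsub_le_TFGroup (M : Matrix (Fin d) (Fin d) ℝ) : Nsub M ≤ TFGroup M := by
  rw [Nsub, Subgroup.closure_le]
  rintro _ ((⟨k, -, rfl⟩ | ⟨w, rfl⟩) | hτ)
  · exact Subgroup.subset_closure (Or.inl ⟨k, rfl⟩)
  · exact Subgroup.subset_closure (Or.inr ⟨w, rfl⟩)
  · exact Subgroup.commutator_le_self _ hτ

lemma conj_mem_Nsub {M : Matrix (Fin d) (Fin d) ℝ} {g n : Equiv.Perm ((Fin d → ℝ) → ℂ)}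
    (hg : g ∈ TFGroup M) (hn : n ∈ Nsub M) : g * n * g⁻¹ ∈ Nsub M := by
  have hgn : ⁅g, n⁆ ∈ Nsub M :=
    Subgroup.subset_closure (Or.inr (Subgroup.commutator_mem_commutator hg (Nsub_le_TFGroup M hn)))
  rw [← inv_mul_cancel_right (g * n * g⁻¹) n, ← commutatorElement_def]
  exact mul_mem hgn hn

lemma Tr_conj_Tr_mul_Mo_mul_Sc (s k l : Fin d → ℝ) (θ : ℝ) :
    Tr s * (Tr k * Mo l * Sc θ) * (Tr s)⁻¹ = Sc (-dotR l s) * Sc θ * Tr k * Mo l := by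
  simp only [Tr_eq_tfShift, Mo_eq_tfShift, Sc_eq_tfShift, tfShift_inv, tfShift_mul_tfShift,
    add_zero, zero_add, sub_self, neg_zero, dotR_zero_left, dotR_zero_right, dotR_neg_right]
  congr 1 <;> abel

lemma Mo_conj_Tr_mul_Mo_mul_Sc (m k l : Fin d → ℝ) (θ : ℝ) :
    Mo m * (Tr k * Mo l * Sc θ) * (Mo m)⁻¹ = Sc (dotR m k) * Sc θ * Tr k * Mo l := by
  simp only [Tr_eq_tfShift, Mo_eq_tfShift, Sc_eq_tfShift, tfShift_inv, tfShift_mul_tfShift,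
    add_zero, zero_add, sub_self, neg_zero, dotR_zero_left, dotR_zero_right]
  congr 1 <;> abel

/-- For `B ∈ GL(d,ℚ)`, the subgroup
`N = ⟨T_k, M_l, τ : k ∈ B^{-tr}ℤ^d ∩ ℤ^d, l ∈ Bℤ^d, τ ∈ [G,G]⟩` is an abelian normal
subgroup of `G = ⟨T_k, M_l : k ∈ ℤ^d, l ∈ Bℤ^d⟩`; concretely it is closed under conjugation,
with `T_s (T_k M_l τ) T_s⁻¹ = e^{-2πi⟨l,s⟩} τ T_k M_l` for `s ∈ ℤ^d` and
`M_s (T_k M_l τ) M_s⁻¹ = τ T_k M_l` for `s ∈ Bℤ^d`. -/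
theorem stmt5 {d : ℕ} (B : Matrix (Fin d) (Fin d) ℚ) (hB : IsUnit B.det)
    (Br : Matrix (Fin d) (Fin d) ℝ) (hBr : Br = B.map (Rat.cast : ℚ → ℝ)) :
    (∀ a b : Equiv.Perm ((Fin d → ℝ) → ℂ), a ∈ Nsub Br → b ∈ Nsub Br → a * b = b * a) ∧
    Nsub Br ≤ TFGroup Br ∧
    (∀ g ∈ TFGroup Br, ∀ n ∈ Nsub Br, g * n * g⁻¹ ∈ Nsub Br) ∧
    (∀ (s k : Fin d → ℤ),
      (∃ z : Fin d → ℤ, (fun i => (k i : ℝ)) = (Br⁻¹)ᵀ.mulVec (fun i => (z i : ℝ))) →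
      ∀ (w : Fin d → ℤ) (θ : ℝ),
        Tr (fun i => (s i : ℝ)) *
            (Tr (fun i => (k i : ℝ)) * Mo (Br.mulVec (fun i => (w i : ℝ))) * Sc θ) *
            (Tr (fun i => (s i : ℝ)))⁻¹ =
          Sc (-(dotR (Br.mulVec (fun i => (w i : ℝ))) (fun i => (s i : ℝ)))) * Sc θ *
            Tr (fun i => (k i : ℝ)) * Mo (Br.mulVec (fun i => (w i : ℝ)))) ∧
    (∀ (s' k : Fin d → ℤ),
      (∃ z : Fin d → ℤ, (fun i => (k i : ℝ)) = (Br⁻¹)ᵀ.mulVec (fun i => (z i : ℝ))) →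
      ∀ (w : Fin d → ℤ) (θ : ℝ),
        Mo (Br.mulVec (fun i => (s' i : ℝ))) *
            (Tr (fun i => (k i : ℝ)) * Mo (Br.mulVec (fun i => (w i : ℝ))) * Sc θ) *
            (Mo (Br.mulVec (fun i => (s' i : ℝ))))⁻¹ =
          Sc θ * Tr (fun i => (k i : ℝ)) * Mo (Br.mulVec (fun i => (w i : ℝ)))) := by
  have hBr_det : IsUnit Br.det :=
    hBr ▸ (RingHom.map_det (Rat.castHom ℝ) B) ▸ hB.map (Rat.castHom ℝ)
  refine ⟨fun a b ha hb => ?_, Nsub_le_TFGroup Br, fun g hg n hn => conj_mem_Nsub hg hn,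
    fun s k _ w θ => Tr_conj_Tr_mul_Mo_mul_Sc _ _ _ θ, fun s k hk w θ => ?_⟩
  · exact tfShiftGroup_commute (fun _ ha _ hl => exists_int_dotR_eq_of_mem_matLattice hBr_det ha hl)
      (Nsub_le_tfShiftGroup Br ha) (Nsub_le_tfShiftGroup Br hb)
  · obtain ⟨z, hz⟩ := hk
    obtain ⟨n, hn⟩ := exists_int_dotR_eq_of_mem_matLattice hBr_det
      (hz ▸ mulVec_intCast_mem_matLattice _ z) (mulVec_intCast_mem_matLattice Br s)
    rw [Mo_conj_Tr_mul_Mo_mul_Sc, hn, Sc_intCast, one_mul]
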